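/- B is a finitely generated A-module via Δ; more precisely, B is generated as an A-module by the classes of 1, t, t^2, …, t^{l−1}. -/
import Mathlib

open MvPolynomial

set_option maxHeartbeats 800000
set_option synthInstance.maxHeartbeats 200000

noncomputable section

/-- `A = ℤ[x,y]/(x^l − y^l)`, with `x = X 0`, `y = X 1`. -/
def IA (l : ℕ) : Ideal (MvPolynomial (Fin 2) ℤ) := Ideal.span {X 0 ^ l - X 1 ^ l}

/-- `B = ℤ[x,t]/(t^l − 1)`, with `x = X 0`, `t = X 1`. -/
def IB (l : ℕ) : Ideal (MvPolynomial (Fin 2) ℤ) := Ideal.span {X 1 ^ l - 1}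

abbrev Aq (l : ℕ) := MvPolynomial (Fin 2) ℤ ⧸ IA l
abbrev Bq (l : ℕ) := MvPolynomial (Fin 2) ℤ ⧸ IB l

/-- The class of `x` in `A`. -/
def xA (l : ℕ) : Aq l := Ideal.Quotient.mk (IA l) (X 0)
/-- The class of `y` in `A`. -/
def yA (l : ℕ) : Aq l := Ideal.Quotient.mk (IA l) (X 1)
/-- The class of `x` in `B`. -/
def xB (l : ℕ) : Bq l := Ideal.Quotient.mk (IB l) (X 0)
/-- The class of `t` in `B`. -/
def tB (l : ℕ) : Bq l := Ideal.Quotient.mk (IB l) (X 1)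

lemma tB_pow (l : ℕ) : tB l ^ l = 1 := by
  have h : (X 1 ^ l - 1 : MvPolynomial (Fin 2) ℤ) ∈ IB l := Ideal.subset_span rfl
  have h2 : Ideal.Quotient.mk (IB l) (X 1 ^ l - 1) = 0 :=
    Ideal.Quotient.eq_zero_iff_mem.mpr h
  have h3 : tB l ^ l - 1 = 0 := by
    rw [tB, ← map_pow, ← map_one (Ideal.Quotient.mk (IB l)), ← map_sub]
    simpa using h2
  exact sub_eq_zero.mp h3

/-- The diagonal ring homomorphism `Δ : A → B`, determined by `x ↦ x`, `y ↦ t·x`. -/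
def Δmap (l : ℕ) : Aq l →+* Bq l :=
  Ideal.Quotient.lift (IA l) ((aeval ![xB l, tB l * xB l]).toRingHom)
    (by
      intro p hp
      obtain ⟨c, rfl⟩ := Ideal.mem_span_singleton'.mp hp
      have key : (aeval ![xB l, tB l * xB l]) (X 0 ^ l - X 1 ^ l : MvPolynomial (Fin 2) ℤ) = 0 := by
        simp [mul_pow, tB_pow l]
      simp only [AlgHom.toRingHom_eq_coe, RingHom.coe_coe, map_mul, key, mul_zero])

lemma Δmap_xA (l : ℕ) : Δmap l (xA l) = xB l := by
  simp [Δmap, xA]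

lemma Δmap_yA (l : ℕ) : Δmap l (yA l) = tB l * xB l := by
  simp [Δmap, yA]

/-- The ideal `I = (x, y) ⊆ A`. -/
def Iid (l : ℕ) : Ideal (Aq l) := Ideal.span {xA l, yA l}

/-- `B` is an `A`-algebra (hence an `A`-module) via `Δ`. -/
instance instAlgAB (l : ℕ) : Algebra (Aq l) (Bq l) := (Δmap l).toAlgebra

/-- The `A`-submodule `x^m·B = {x^m·b : b ∈ B}` of `B`. -/
def xmB (l m : ℕ) : Submodule (Aq l) (Bq l) :=
  LinearMap.range (LinearMap.mulLeft (Aq l) (xB l ^ m))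

lemma smul_def' (l : ℕ) (a : Aq l) (b : Bq l) : a • b = Δmap l a * b := by
  rw [Algebra.smul_def, RingHom.algebraMap_toAlgebra]

lemma span_t_top (l : ℕ) (hl : 1 ≤ l) :
    Submodule.span (Aq l) (Set.range fun i : Fin l => tB l ^ (i : ℕ)) = ⊤ := by
  set S := Submodule.span (Aq l) (Set.range fun i : Fin l => tB l ^ (i : ℕ)) with hS
  have h1 : (1 : Bq l) ∈ S := by
    apply Submodule.subset_span
    exact ⟨⟨0, hl⟩, by simp⟩
  have hmulx : ∀ b ∈ S, xB l * b ∈ S := by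
    intro b hb
    have : xB l * b = xA l • b := by rw [smul_def', Δmap_xA]
    rw [this]; exact S.smul_mem _ hb
  have hmult : ∀ b ∈ S, tB l * b ∈ S := by
    intro b hb
    induction hb using Submodule.span_induction with
    | mem x hx =>
      obtain ⟨i, rfl⟩ := hx
      simp only
      rw [← pow_succ']
      rcases eq_or_lt_of_le (Nat.succ_le_of_lt i.isLt) with h | h
      · rw [show (i : ℕ) + 1 = l from h, tB_pow]; exact h1
      · exact Submodule.subset_span ⟨⟨(i : ℕ) + 1, h⟩, rfl⟩
    | zero => simp only [mul_zero]; exact S.zero_mem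
    | add x y _ _ hx hy => rw [mul_add]; exact S.add_mem hx hy
    | smul a x _ hx =>
      rw [smul_def', ← mul_assoc, mul_comm (tB l), mul_assoc, ← smul_def']
      exact S.smul_mem _ hx
  have key : ∀ p : MvPolynomial (Fin 2) ℤ, Ideal.Quotient.mk (IB l) p ∈ S := by
    intro p
    induction p using MvPolynomial.induction_on with
    | C a =>
      have : Ideal.Quotient.mk (IB l) (C a) =
          Ideal.Quotient.mk (IA l) (C a) • (1 : Bq l) := by
        rw [smul_def', mul_one, Δmap]
        simp
      rw [this]; exact S.smul_mem _ h1
    | add p q hp hq => rw [map_add]; exact S.add_mem hp hq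
    | mul_X p i hp =>
      rw [map_mul]
      fin_cases i
      · rw [mul_comm]; exact hmulx _ hp
      · rw [mul_comm]; exact hmult _ hp
  rw [eq_top_iff]
  rintro b -
  obtain ⟨p, rfl⟩ := Ideal.Quotient.mk_surjective b
  exact key p

/-- `B` is a finitely generated `A`-module via `Δ`; more precisely, `B` is generated as an
`A`-module by the classes of `1, t, t², …, t^{l−1}`. -/
theorem stmt_17 (l : ℕ) (hl : 1 ≤ l) :
    Submodule.span (Aq l) (Set.range fun i : Fin l => tB l ^ (i : ℕ)) = ⊤ ∧
    Module.Finite (Aq l) (Bq l) := by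
  refine ⟨span_t_top l hl, ⟨Submodule.fg_def.mpr ⟨_, Set.finite_range _, span_t_top l hl⟩⟩⟩
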